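/- arXiv:2304.01769 — 6 statements merged into one kernel-verified Lean document; each statement's English description precedes it below -/
import Mathlib

section
/- For all real numbers ε with 0 < ε < 1 and γ with 1 < γ < 2, and every natural number k ≥ 1, the finite sum ∑_{i=1}^{k−1} ε^(γ^i · (2−γ)) is strictly less than ε^(γ(2−γ)) · (1 − ε^((γ−1)(2−γ)))^(−1). -/
/-!
Bernoulli's inequality `γ^i ≥ 1 + i (γ - 1)` and `ε ≤ 1` give
`ε^(γ^i (2 - γ)) ≤ ε^(γ (2 - γ)) · r^(i-1)` with `r = ε^((γ - 1)(2 - γ)) ∈ (0, 1)`, so the sum is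
dominated by a partial geometric series, which stays strictly below `(1 - r)⁻¹` because `r > 0`.
-/

open Finset

lemma sum_Icc_one_eq_sum_range {M : Type*} [AddCommMonoid M] (f : ℕ → M) (m : ℕ) :
    ∑ i ∈ Icc 1 m, f i = ∑ j ∈ range m, f (j + 1) := by
  rw [range_eq_Ico, sum_Ico_add', zero_add, Ico_add_one_right_eq_Icc]

lemma geom_sum_lt_inv_one_sub {K : Type*} [Field K] [LinearOrder K] [IsStrictOrderedRing K]
    {r : K} (hr0 : 0 < r) (hr1 : r < 1) (n : ℕ) : ∑ j ∈ range n, r ^ j < (1 - r)⁻¹ := by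
  have h1r : 0 < 1 - r := sub_pos.mpr hr1
  rw [geom_sum_eq hr1.ne, ← neg_div_neg_eq, neg_sub, neg_sub, div_eq_mul_inv]
  exact mul_lt_of_lt_one_left (inv_pos.mpr h1r) (sub_lt_self 1 (pow_pos hr0 n))

namespace Real

lemma rpow_pow_mul_le {ε γ c : ℝ} (hε0 : 0 < ε) (hε1 : ε ≤ 1) (hγ : -1 ≤ γ) (hc : 0 ≤ c)
    (n : ℕ) : ε ^ (γ ^ (n + 1) * c) ≤ ε ^ (γ * c) * (ε ^ ((γ - 1) * c)) ^ n := by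
  have bernoulli : 1 + (n + 1 : ℕ) * (γ - 1) ≤ γ ^ (n + 1) := by
    simpa using one_add_mul_le_pow (a := γ - 1) (by linarith) (n + 1)
  have hexp : γ * c + n * ((γ - 1) * c) ≤ γ ^ (n + 1) * c := by
    push_cast at bernoulli
    nlinarith
  calc ε ^ (γ ^ (n + 1) * c) ≤ ε ^ (γ * c + n * ((γ - 1) * c)) :=
        rpow_le_rpow_of_exponent_ge hε0 hε1 hexp
    _ = ε ^ (γ * c) * (ε ^ ((γ - 1) * c)) ^ n := by
        rw [rpow_add hε0, mul_comm (n : ℝ), rpow_mul_natCast hε0.le]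

end Real

theorem stmt_1_general (ε γ : ℝ) (hε0 : 0 < ε) (hε1 : ε < 1)
    (hγ1 : 1 < γ) (hγ2 : γ < 2) (k : ℕ) :
    ∑ i ∈ Finset.Icc 1 (k - 1), ε ^ (γ ^ (i : ℝ) * (2 - γ))
      < ε ^ (γ * (2 - γ)) * (1 - ε ^ ((γ - 1) * (2 - γ)))⁻¹ := by
  set r := ε ^ ((γ - 1) * (2 - γ))
  have hr0 : 0 < r := Real.rpow_pos_of_pos hε0 _
  have hr1 : r < 1 := Real.rpow_lt_one hε0.le hε1 (mul_pos (by linarith) (by linarith))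
  calc ∑ i ∈ Icc 1 (k - 1), ε ^ (γ ^ (i : ℝ) * (2 - γ))
      = ∑ j ∈ range (k - 1), ε ^ (γ ^ (j + 1) * (2 - γ)) := by
        simp only [sum_Icc_one_eq_sum_range, Real.rpow_natCast]
    _ ≤ ∑ j ∈ range (k - 1), ε ^ (γ * (2 - γ)) * r ^ j :=
        sum_le_sum fun j _ ↦ Real.rpow_pow_mul_le hε0 hε1.le (by linarith) (by linarith) j
    _ = ε ^ (γ * (2 - γ)) * ∑ j ∈ range (k - 1), r ^ j := (mul_sum ..).symm
    _ < ε ^ (γ * (2 - γ)) * (1 - r)⁻¹ :=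
        mul_lt_mul_of_pos_left (geom_sum_lt_inv_one_sub hr0 hr1 _) (Real.rpow_pos_of_pos hε0 _)

theorem stmt_1 (ε γ : ℝ) (hε0 : 0 < ε) (hε1 : ε < 1)
    (hγ1 : 1 < γ) (hγ2 : γ < 2) (k : ℕ) (hk : 1 ≤ k) :
    ∑ i ∈ Finset.Icc 1 (k - 1), ε ^ (γ ^ (i : ℝ) * (2 - γ))
      < ε ^ (γ * (2 - γ)) * (1 - ε ^ ((γ - 1) * (2 - γ)))⁻¹ :=
  stmt_1_general ε γ hε0 hε1 hγ1 hγ2 k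
end

section
/- With the trumpet setup below, for every r > 0 one has w′(r) + ((n−1)/r)·w(r) ≤ 0. -/
open MeasureTheory

noncomputable def u1' (n : ℕ) (s : ℝ) : ℝ := ((2 - (n : ℝ)) / 2) * s ^ (-(n : ℝ) / 2)

noncomputable def u2' (n : ℕ) (s : ℝ) : ℝ := (2 - (n : ℝ)) * s ^ (1 - (n : ℝ))

noncomputable def w (n : ℕ) (ζ : ℝ → ℝ) (s : ℝ) : ℝ :=
  ζ s * u1' n s + (1 - ζ s) * u2' n s

noncomputable def uA (n : ℕ) (ζ : ℝ → ℝ) (r₀ α r : ℝ) : ℝ :=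
  α + r₀ ^ ((2 - (n : ℝ)) / 2) - ∫ s in Set.Ioi r, w n ζ s

/-! With `L f = f' + ((n-1)/r) f`, the product rule gives
`L w = ζ' (u₁' - u₂') + ζ L u₁' + (1 - ζ) L u₂'`.
Here `L u₂' = 0` (`u₂` is harmonic) and `L u₁' = -((n-2)/2)² r^(-n/2-1) ≤ 0`.
The cross term is `≤ 0` because `ζ' ≤ 0`, and either `ζ' = 0` (for `r > 2r₀`) or
`r ≤ 2r₀ < 2^(2/(n-2))`, which is exactly the range where `u₂' ≤ u₁'`. -/

theorem HasDerivAt.interpolate {ζ f g : ℝ → ℝ} {ζ' f' g' x : ℝ} (hζ : HasDerivAt ζ ζ' x)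
    (hf : HasDerivAt f f' x) (hg : HasDerivAt g g' x) :
    HasDerivAt (fun s => ζ s * f s + (1 - ζ s) * g s)
      (ζ' * (f x - g x) + ζ x * f' + (1 - ζ x) * g') x :=
  ((hζ.mul hf).add ((hζ.const_sub 1).mul hg)).congr_deriv (by ring)

theorem deriv_eq_zero_of_zero_on_Ici {ζ : ℝ → ℝ} {a r : ℝ}
    (h : ∀ s, a ≤ s → ζ s = 0) (hr : a < r) : deriv ζ r = 0 := by
  have hζ : ζ =ᶠ[nhds r] fun _ => 0 := by
    filter_upwards [Ioi_mem_nhds hr] with s hs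
    exact h s (le_of_lt hs)
  rw [hζ.deriv_eq, deriv_const]

theorem Real.mul_rpow_sub_one_add_div_mul_rpow {r : ℝ} (hr : 0 < r) (p k : ℝ) :
    p * r ^ (p - 1) + k / r * r ^ p = (p + k) * r ^ (p - 1) := by
  rw [Real.rpow_sub_one hr.ne']
  field_simp

section Trumpet

variable {n : ℕ} {r : ℝ}

theorem hasDerivAt_u1' (hr : 0 < r) :
    HasDerivAt (u1' n) ((2 - n) / 2 * (-n / 2 * r ^ (-(n : ℝ) / 2 - 1))) r :=
  (Real.hasDerivAt_rpow_const (Or.inl hr.ne')).const_mul _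

theorem hasDerivAt_u2' (hr : 0 < r) :
    HasDerivAt (u2' n) ((2 - n) * ((1 - n) * r ^ (1 - (n : ℝ) - 1))) r :=
  (Real.hasDerivAt_rpow_const (Or.inl hr.ne')).const_mul _

theorem u1'_radial_identity (hr : 0 < r) :
    (2 - n) / 2 * (-n / 2 * r ^ (-(n : ℝ) / 2 - 1)) + (n - 1) / r * u1' n r
      = -(((n - 2) / 2) ^ 2 * r ^ (-(n : ℝ) / 2 - 1)) := by
  unfold u1'
  linear_combination (2 - (n : ℝ)) / 2 * Real.mul_rpow_sub_one_add_div_mul_rpow hr (-n / 2) (n - 1)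

theorem u2'_radial_identity (hr : 0 < r) :
    (2 - n) * ((1 - n) * r ^ (1 - (n : ℝ) - 1)) + (n - 1) / r * u2' n r = 0 := by
  unfold u2'
  linear_combination (2 - (n : ℝ)) * Real.mul_rpow_sub_one_add_div_mul_rpow hr (1 - n) (n - 1)

theorem u2'_le_u1' (hn : 2 < n) (hr : 0 < r) (hr2 : r ≤ 2 ^ ((2 : ℝ) / ((n : ℝ) - 2))) :
    u2' n r ≤ u1' n r := by
  have hq : (0 : ℝ) < (n - 2) / 2 := by
    have : (2 : ℝ) < n := by exact_mod_cast hn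
    linarith
  have hpow : r ^ (((n : ℝ) - 2) / 2) ≤ 2 := by
    rwa [← inv_div, Real.le_rpow_inv_iff_of_pos hr.le zero_le_two hq] at hr2
  have hsplit : r ^ (-(n : ℝ) / 2) = r ^ (((n : ℝ) - 2) / 2) * r ^ (1 - (n : ℝ)) := by
    rw [← Real.rpow_add hr]
    ring_nf
  have hb : 0 < r ^ (1 - (n : ℝ)) := Real.rpow_pos_of_pos hr _
  unfold u1' u2'
  rw [hsplit]
  nlinarith [mul_nonneg hq.le (mul_nonneg (sub_nonneg.2 hpow) hb.le)]

end Trumpet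

theorem stmt_11_general (n : ℕ) (hn : 3 ≤ n) (r₀ : ℝ)
    (hr₀2 : 2 * r₀ < (2 : ℝ) ^ ((2 : ℝ) / ((n : ℝ) - 2)))
    (ζ : ℝ → ℝ) (hζC : ContDiff ℝ 1 ζ) (hζ01 : ∀ r : ℝ, 0 ≤ ζ r ∧ ζ r ≤ 1)
    (hζzero : ∀ r : ℝ, 2 * r₀ ≤ r → ζ r = 0)
    (hζder : ∀ r : ℝ, deriv ζ r ≤ 0)
    (r : ℝ) (hr : 0 < r) :
    deriv (w n ζ) r + (((n : ℝ) - 1) / r) * w n ζ r ≤ 0 := by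
  have hζ : HasDerivAt ζ (deriv ζ r) r := (hζC.differentiable one_ne_zero r).hasDerivAt
  have hw : HasDerivAt (w n ζ) _ r := hζ.interpolate (hasDerivAt_u1' hr) (hasDerivAt_u2' hr)
  have hcross : deriv ζ r * (u1' n r - u2' n r) ≤ 0 := by
    rcases le_or_gt r (2 * r₀) with hle | hgt
    · exact mul_nonpos_of_nonpos_of_nonneg (hζder r)
        (sub_nonneg.2 (u2'_le_u1' (by omega) hr (hle.trans hr₀2.le)))
    · rw [deriv_eq_zero_of_zero_on_Ici hζzero hgt, zero_mul]
  have hu1 : ζ r * -(((n - 2) / 2) ^ 2 * r ^ (-(n : ℝ) / 2 - 1)) ≤ 0 :=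
    mul_nonpos_of_nonneg_of_nonpos (hζ01 r).1 (neg_nonpos.2 (by positivity))
  rw [hw.deriv, w]
  linear_combination hcross + hu1 + ζ r * u1'_radial_identity (n := n) hr
    + (1 - ζ r) * u2'_radial_identity (n := n) hr

theorem stmt_11 (n : ℕ) (hn : 3 ≤ n) (r₀ : ℝ) (hr₀ : 0 < r₀)
    (hr₀2 : 2 * r₀ < (2 : ℝ) ^ ((2 : ℝ) / ((n : ℝ) - 2)))
    (ζ : ℝ → ℝ) (hζC : ContDiff ℝ 1 ζ) (hζ01 : ∀ r : ℝ, 0 ≤ ζ r ∧ ζ r ≤ 1)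
    (hζone : ∀ r : ℝ, r ≤ r₀ → ζ r = 1) (hζzero : ∀ r : ℝ, 2 * r₀ ≤ r → ζ r = 0)
    (hζder : ∀ r : ℝ, deriv ζ r ≤ 0)
    (r : ℝ) (hr : 0 < r) :
    deriv (w n ζ) r + (((n : ℝ) - 1) / r) * w n ζ r ≤ 0 :=
  stmt_11_general n hn r₀ hr₀2 ζ hζC hζ01 hζzero hζder r hr
end

section
/- With the trumpet setup below, for every real α and every r with 0 < r ≤ r₀ one has u_α(r) > α + r^((2−n)/2). -/
open MeasureTheory

/-!
On `(r, 2r₀]` the profile `w` is a convex combination of `u₁'` and `u₂'`, and `u₂' ≤ u₁'`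
there precisely because `s ≤ 2 ^ (2/(n-2))`; so `∫_{(r,2r₀]} w ≤ (2r₀)^{(2-n)/2} - r^{(2-n)/2}`.
Beyond `2r₀` we have `w = u₂'`, whose integral `-(2r₀)^{2-n}` is strictly negative. Finally
`(2r₀)^{(2-n)/2} ≤ r₀^{(2-n)/2}` because the exponent is negative.
-/

open Set Real

section Profiles

variable {n : ℕ}

lemma integrableOn_Ioi_u1' (hn : 2 < n) {x : ℝ} (hx : 0 < x) : IntegrableOn (u1' n) (Ioi x) := by
  have hn' : (2 : ℝ) < n := by exact_mod_cast hn
  exact (integrableOn_Ioi_rpow_of_lt (by linarith) hx).const_mul _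

lemma integrableOn_Ioi_u2' (hn : 2 < n) {x : ℝ} (hx : 0 < x) : IntegrableOn (u2' n) (Ioi x) := by
  have hn' : (2 : ℝ) < n := by exact_mod_cast hn
  exact (integrableOn_Ioi_rpow_of_lt (by linarith) hx).const_mul _

lemma integral_Ioi_u1' (hn : 2 < n) {x : ℝ} (hx : 0 < x) :
    ∫ s in Ioi x, u1' n s = -x ^ ((2 - (n : ℝ)) / 2) := by
  have hn' : (2 : ℝ) < n := by exact_mod_cast hn
  have hexp : -(n : ℝ) / 2 + 1 = (2 - n) / 2 := by ring
  simp only [u1', integral_const_mul, integral_Ioi_rpow_of_lt (by linarith : -(n : ℝ) / 2 < -1) hx,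
    hexp]
  field_simp [(by linarith : (2 - (n : ℝ)) ≠ 0)]

lemma integral_Ioi_u2' (hn : 2 < n) {x : ℝ} (hx : 0 < x) :
    ∫ s in Ioi x, u2' n s = -x ^ (2 - (n : ℝ)) := by
  have hn' : (2 : ℝ) < n := by exact_mod_cast hn
  have hexp : 1 - (n : ℝ) + 1 = 2 - n := by ring
  simp only [u2', integral_const_mul, integral_Ioi_rpow_of_lt (by linarith : 1 - (n : ℝ) < -1) hx,
    hexp]
  field_simp [(by linarith : (2 - (n : ℝ)) ≠ 0)]

lemma intervalIntegral_u1' (hn : 2 < n) {a b : ℝ} (ha : 0 < a) (hab : a ≤ b) :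
    ∫ s in a..b, u1' n s = b ^ ((2 - (n : ℝ)) / 2) - a ^ ((2 - (n : ℝ)) / 2) := by
  rw [← intervalIntegral.integral_Ioi_sub_Ioi (integrableOn_Ioi_u1' hn ha) hab,
    integral_Ioi_u1' hn ha, integral_Ioi_u1' hn (ha.trans_le hab)]
  ring

/-- Writing `t = s ^ ((n-2)/2)`, one has `u₂' s = 2 u₁' s / t` with `u₁' s < 0`. -/
lemma u2'_le_u1'_s13 (hn : 2 < n) {s : ℝ} (hs0 : 0 < s)
    (hs : s ≤ (2 : ℝ) ^ ((2 : ℝ) / ((n : ℝ) - 2))) : u2' n s ≤ u1' n s := by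
  have hn' : (2 : ℝ) < n := by exact_mod_cast hn
  set t := s ^ (((n : ℝ) - 2) / 2) with ht
  have ht0 : 0 < t := rpow_pos_of_pos hs0 _
  have ht2 : t ≤ 2 := by
    calc t ≤ ((2 : ℝ) ^ ((2 : ℝ) / ((n : ℝ) - 2))) ^ (((n : ℝ) - 2) / 2) :=
          rpow_le_rpow hs0.le hs (by linarith)
      _ = 2 := by
          rw [← rpow_mul zero_le_two, div_mul_div_cancel₀ (by linarith), div_self two_ne_zero,
            rpow_one]
  have hsplit : s ^ (1 - (n : ℝ)) = t⁻¹ * s ^ (-(n : ℝ) / 2) := by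
    rw [ht, ← rpow_neg hs0.le, ← rpow_add hs0]
    ring_nf
  have hB : 0 < s ^ (-(n : ℝ) / 2) := rpow_pos_of_pos hs0 _
  have hinv : (1 : ℝ) / 2 ≤ t⁻¹ := by
    rw [one_div]; exact inv_anti₀ ht0 ht2
  simp only [u1', u2', hsplit]
  nlinarith [mul_le_mul_of_nonneg_right hinv hB.le]

end Profiles

section Blend

variable {n : ℕ} {ζ : ℝ → ℝ}

lemma w_le_u1' {s : ℝ} (hζs : ζ s ≤ 1) (hs : u2' n s ≤ u1' n s) : w n ζ s ≤ u1' n s := by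
  have hw : w n ζ s = u1' n s - (1 - ζ s) * (u1' n s - u2' n s) := by
    simp only [w]
    ring
  rw [hw]
  linarith [mul_nonneg (sub_nonneg.2 hζs) (sub_nonneg.2 hs)]

lemma w_eq_u2' {s : ℝ} (hζs : ζ s = 0) : w n ζ s = u2' n s := by
  simp [w, hζs]

lemma integrableOn_Ioi_w (hn : 2 < n) (hζ : Measurable ζ) (hζ01 : ∀ s, 0 ≤ ζ s ∧ ζ s ≤ 1)
    {x : ℝ} (hx : 0 < x) : IntegrableOn (w n ζ) (Ioi x) := by
  have hbound : ∀ s, ‖ζ s‖ ≤ 1 ∧ ‖1 - ζ s‖ ≤ 1 := fun s => by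
    obtain ⟨h0, h1⟩ := hζ01 s
    simp only [Real.norm_eq_abs, abs_le]
    constructor <;> constructor <;> linarith
  exact ((integrableOn_Ioi_u1' hn hx).bdd_mul hζ.aestronglyMeasurable
    (ae_of_all _ fun s => (hbound s).1)).add
    ((integrableOn_Ioi_u2' hn hx).bdd_mul (measurable_const.sub hζ).aestronglyMeasurable
      (ae_of_all _ fun s => (hbound s).2))

lemma integral_Ioi_w_lt (hn : 2 < n) (hζ : Measurable ζ) (hζ01 : ∀ s, 0 ≤ ζ s ∧ ζ s ≤ 1)
    {r c : ℝ} (hr : 0 < r) (hrc : r ≤ c) (hc : c ≤ (2 : ℝ) ^ ((2 : ℝ) / ((n : ℝ) - 2)))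
    (hζc : ∀ s, c < s → ζ s = 0) :
    ∫ s in Ioi r, w n ζ s < c ^ ((2 - (n : ℝ)) / 2) - r ^ ((2 - (n : ℝ)) / 2) := by
  have hc0 : 0 < c := hr.trans_le hrc
  have hw := integrableOn_Ioi_w hn hζ hζ01 hr
  have hnear : ∫ s in r..c, w n ζ s ≤ ∫ s in r..c, u1' n s :=
    intervalIntegral.integral_mono_on hrc
      ((intervalIntegrable_iff_integrableOn_Ioc_of_le hrc).2 (hw.mono_set Ioc_subset_Ioi_self))
      ((intervalIntegrable_iff_integrableOn_Ioc_of_le hrc).2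
        ((integrableOn_Ioi_u1' hn hr).mono_set Ioc_subset_Ioi_self))
      fun s hs => w_le_u1' (hζ01 s).2 (u2'_le_u1'_s13 hn (hr.trans_le hs.1) (hs.2.trans hc))
  have hfar : ∫ s in Ioi c, w n ζ s = -c ^ (2 - (n : ℝ)) := by
    rw [← integral_Ioi_u2' hn hc0]
    exact setIntegral_congr_fun measurableSet_Ioi fun s hs => w_eq_u2' (hζc s hs)
  rw [← intervalIntegral.integral_interval_add_Ioi hw (hw.mono_set (Ioi_subset_Ioi hrc)), hfar,
    ← intervalIntegral_u1' hn hr hrc]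
  linarith [rpow_pos_of_pos hc0 (2 - (n : ℝ))]

end Blend

theorem stmt_13_general (n : ℕ) (hn : 3 ≤ n) (r₀ : ℝ)
    (hr₀2 : 2 * r₀ < (2 : ℝ) ^ ((2 : ℝ) / ((n : ℝ) - 2)))
    (ζ : ℝ → ℝ) (hζC : ContDiff ℝ 1 ζ) (hζ01 : ∀ r : ℝ, 0 ≤ ζ r ∧ ζ r ≤ 1)
    (hζzero : ∀ r : ℝ, 2 * r₀ ≤ r → ζ r = 0)
    (α : ℝ) (r : ℝ) (hr0 : 0 < r) (hr : r ≤ r₀) :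
    uA n ζ r₀ α r > α + r ^ ((2 - (n : ℝ)) / 2) := by
  have hexp : (2 - (n : ℝ)) / 2 ≤ 0 := by
    have hn' : (3 : ℝ) ≤ n := by exact_mod_cast hn
    linarith
  have hint := integral_Ioi_w_lt hn hζC.continuous.measurable hζ01 hr0 (by linarith) hr₀2.le
    fun s hs => hζzero s hs.le
  have hmono : (2 * r₀) ^ ((2 - (n : ℝ)) / 2) ≤ r₀ ^ ((2 - (n : ℝ)) / 2) :=
    rpow_le_rpow_of_nonpos (hr0.trans_le hr) (by linarith) hexp
  rw [uA, gt_iff_lt]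
  linarith

theorem stmt_13 (n : ℕ) (hn : 3 ≤ n) (r₀ : ℝ) (hr₀ : 0 < r₀)
    (hr₀2 : 2 * r₀ < (2 : ℝ) ^ ((2 : ℝ) / ((n : ℝ) - 2)))
    (ζ : ℝ → ℝ) (hζC : ContDiff ℝ 1 ζ) (hζ01 : ∀ r : ℝ, 0 ≤ ζ r ∧ ζ r ≤ 1)
    (hζone : ∀ r : ℝ, r ≤ r₀ → ζ r = 1) (hζzero : ∀ r : ℝ, 2 * r₀ ≤ r → ζ r = 0)
    (hζder : ∀ r : ℝ, deriv ζ r ≤ 0)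
    (α : ℝ) (r : ℝ) (hr0 : 0 < r) (hr : r ≤ r₀) :
    uA n ζ r₀ α r > α + r ^ ((2 - (n : ℝ)) / 2) :=
  stmt_13_general n hn r₀ hr₀2 ζ hζC hζ01 hζzero α r hr0 hr
end

section
/- With the trumpet setup below, for every real α, the function u_α(r) tends to +∞ as r tends to 0 from the right (i.e. u_α tends to atTop along nhdsWithin 0 (Ioi 0)). -/
open MeasureTheory

theorem stmt_14 (n : ℕ) (hn : 3 ≤ n) (r₀ : ℝ) (hr₀ : 0 < r₀)
    (hr₀2 : 2 * r₀ < (2 : ℝ) ^ ((2 : ℝ) / ((n : ℝ) - 2)))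
    (ζ : ℝ → ℝ) (hζC : ContDiff ℝ 1 ζ) (hζ01 : ∀ r : ℝ, 0 ≤ ζ r ∧ ζ r ≤ 1)
    (hζone : ∀ r : ℝ, r ≤ r₀ → ζ r = 1) (hζzero : ∀ r : ℝ, 2 * r₀ ≤ r → ζ r = 0)
    (hζder : ∀ r : ℝ, deriv ζ r ≤ 0)
    (α : ℝ) :
    Filter.Tendsto (uA n ζ r₀ α) (nhdsWithin 0 (Set.Ioi 0)) Filter.atTop := by
  have hn3 : (3 : ℝ) ≤ (n : ℝ) := by exact_mod_cast hn
  set c : ℝ := (2 - (n : ℝ)) / 2 with hc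
  have hcneg : c < 0 := by rw [hc]; nlinarith
  -- continuity of w on positive reals
  have hwcont : ContinuousOn (w n ζ) (Set.Ioi (0:ℝ)) := by
    have h1 : ContinuousOn (fun s : ℝ => s ^ (-(n : ℝ) / 2)) (Set.Ioi (0:ℝ)) :=
      continuousOn_id.rpow_const (fun x hx => Or.inl (ne_of_gt hx))
    have h2 : ContinuousOn (fun s : ℝ => s ^ (1 - (n : ℝ))) (Set.Ioi (0:ℝ)) :=
      continuousOn_id.rpow_const (fun x hx => Or.inl (ne_of_gt hx))
    have hz : ContinuousOn ζ (Set.Ioi (0:ℝ)) := hζC.continuous.continuousOn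
    unfold w u1' u2'
    exact (hz.mul (continuousOn_const.mul h1)).add
      ((continuousOn_const.sub hz).mul (continuousOn_const.mul h2))
  -- integrability of w on Ioi a for a > 0
  have hwint : ∀ a : ℝ, 0 < a → IntegrableOn (w n ζ) (Set.Ioi a) := by
    intro a ha
    set b : ℝ := max a (2 * r₀) with hb
    have hab : a ≤ b := le_max_left _ _
    rw [← Set.Ioc_union_Ioi_eq_Ioi hab, integrableOn_union]
    constructor
    · have : IntegrableOn (w n ζ) (Set.Icc a b) :=
        (hwcont.mono (by intro x hx; exact lt_of_lt_of_le ha hx.1)).integrableOn_compact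
          isCompact_Icc
      exact this.mono_set Set.Ioc_subset_Icc_self
    · have hb0 : 0 < b := lt_of_lt_of_le ha hab
      have hint : IntegrableOn (fun s : ℝ => s ^ (1 - (n : ℝ))) (Set.Ioi b) :=
        integrableOn_Ioi_rpow_of_lt (by linarith) hb0
      have hint2 : IntegrableOn (fun s : ℝ => (2 - (n:ℝ)) * s ^ (1 - (n : ℝ))) (Set.Ioi b) :=
        hint.const_mul _
      refine hint2.congr_fun (fun x hx => ?_) measurableSet_Ioi
      have hx2 : 2 * r₀ ≤ x := le_of_lt (lt_of_le_of_lt (le_max_right a (2*r₀)) hx)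
      simp [w, u2', hζzero x hx2]
  -- value of uA for 0 < r < r₀
  have key : ∀ r : ℝ, 0 < r → r < r₀ →
      uA n ζ r₀ α r = α - (∫ s in Set.Ioi r₀, w n ζ s) + r ^ c := by
    intro r hr hrr₀
    have hrr : r ≤ r₀ := le_of_lt hrr₀
    have hsplit : (∫ s in Set.Ioi r, w n ζ s)
        = (∫ s in Set.Ioc r r₀, w n ζ s) + ∫ s in Set.Ioi r₀, w n ζ s := by
      rw [← setIntegral_union (Set.Ioc_disjoint_Ioi le_rfl) measurableSet_Ioi
        (((hwint r hr).mono_set (by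
          intro x hx; exact hx.1)))
        (hwint r₀ hr₀), Set.Ioc_union_Ioi_eq_Ioi hrr]
    have hIoc : (∫ s in Set.Ioc r r₀, w n ζ s) = r₀ ^ c - r ^ c := by
      have hcongr : (∫ s in Set.Ioc r r₀, w n ζ s)
          = ∫ s in Set.Ioc r r₀, ((2 - (n : ℝ)) / 2) * s ^ (-(n : ℝ) / 2) := by
        refine setIntegral_congr_fun measurableSet_Ioc (fun x hx => ?_)
        simp [w, u1', hζone x hx.2]
      rw [hcongr, ← intervalIntegral.integral_of_le hrr, intervalIntegral.integral_const_mul,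
        integral_rpow]
      · have hne : -(n : ℝ) / 2 + 1 = c := by rw [hc]; ring
        rw [hne]
        have hc0 : c ≠ 0 := ne_of_lt hcneg
        field_simp
        ring
      · right
        constructor
        · intro h; rw [div_eq_iff (by norm_num : (2:ℝ) ≠ 0)] at h; linarith
        · rw [Set.uIcc_of_le hrr]
          intro h
          exact absurd h.1 (not_le.mpr hr)
    rw [uA, hsplit, hIoc]
    ring
  -- tendsto
  have hev : (fun r : ℝ => α - (∫ s in Set.Ioi r₀, w n ζ s) + r ^ c)
      =ᶠ[nhdsWithin (0:ℝ) (Set.Ioi 0)] uA n ζ r₀ α := by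
    filter_upwards [Ioo_mem_nhdsGT_of_mem (Set.left_mem_Ico.mpr hr₀)] with r hr
    exact (key r hr.1 hr.2).symm
  refine Filter.Tendsto.congr' hev (Filter.tendsto_atTop_add_const_left _ _ ?_)
  have h1 : Filter.Tendsto (fun r : ℝ => (r⁻¹) ^ (-c)) (nhdsWithin 0 (Set.Ioi 0))
      Filter.atTop :=
    (tendsto_rpow_atTop (by linarith)).comp tendsto_inv_nhdsGT_zero
  refine h1.congr' ?_
  filter_upwards [self_mem_nhdsWithin] with r hr
  rw [Real.inv_rpow hr.le, ← Real.rpow_neg hr.le, neg_neg]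
end

section
/- With the trumpet setup below, for every real α and every r with 0 < r < r₀ one has u_α(r) + (2/(n−2))·r·w(r) > α. -/
/-!
On `(r, r₀]` the cutoff is `1`, so `w = u₁' = (s ↦ s ^ ((2 - n) / 2))'` there and the fundamental
theorem of calculus gives `u_α(r) = α + r ^ ((2 - n) / 2) - ∫_{(r₀, ∞)} w`. The correction term
`(2 / (n - 2)) r w(r)` is exactly `-r ^ ((2 - n) / 2)`, so the sum is `α - ∫_{(r₀, ∞)} w`, which
exceeds `α` because `w` is a convex combination of the negative functions `u₁'` and `u₂'`.
-/

open MeasureTheory Set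

theorem setIntegral_neg_of_forall_neg {X : Type*} [MeasurableSpace X] {μ : Measure X}
    {f : X → ℝ} {s : Set X} (hs : MeasurableSet s) (hμs : μ s ≠ 0)
    (hf : IntegrableOn f s μ) (hneg : ∀ x ∈ s, f x < 0) : ∫ x in s, f x ∂μ < 0 := by
  have hsupport : Function.support (-f) ∩ s = s :=
    inter_eq_right.2 fun x hx => neg_ne_zero.2 (hneg x hx).ne
  have hpos : 0 < ∫ x in s, -f x ∂μ := by
    refine (setIntegral_pos_iff_support_of_nonneg_ae ?_ hf.neg).2 ?_
    · exact (ae_restrict_iff' hs).2 (ae_of_all _ fun x hx => (neg_pos.2 (hneg x hx)).le)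
    · rwa [hsupport, pos_iff_ne_zero]
  rwa [integral_neg, neg_pos] at hpos

theorem convex_combination_neg {a b t : ℝ} (ha : a < 0) (hb : b < 0) (ht₀ : 0 ≤ t) (ht₁ : t ≤ 1) :
    t * a + (1 - t) * b < 0 := by
  have hta := mul_le_mul_of_nonneg_left (le_max_left a b) ht₀
  have htb := mul_le_mul_of_nonneg_left (le_max_right a b) (sub_nonneg.2 ht₁)
  linarith [max_lt ha hb]

section Trumpet

variable {n : ℕ} {ζ : ℝ → ℝ}

theorem u1'_neg (hn : 2 < n) {s : ℝ} (hs : 0 < s) : u1' n s < 0 := by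
  have : (2 : ℝ) < n := by exact_mod_cast hn
  exact mul_neg_of_neg_of_pos (by linarith) (Real.rpow_pos_of_pos hs _)

theorem u2'_neg (hn : 2 < n) {s : ℝ} (hs : 0 < s) : u2' n s < 0 := by
  have : (2 : ℝ) < n := by exact_mod_cast hn
  exact mul_neg_of_neg_of_pos (by linarith) (Real.rpow_pos_of_pos hs _)

theorem w_neg (hn : 2 < n) (hζ : ∀ s, 0 ≤ ζ s ∧ ζ s ≤ 1) {s : ℝ} (hs : 0 < s) :
    w n ζ s < 0 :=
  convex_combination_neg (u1'_neg hn hs) (u2'_neg hn hs) (hζ s).1 (hζ s).2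

theorem w_of_eq_one {s : ℝ} (h : ζ s = 1) : w n ζ s = u1' n s := by
  simp [w, h]

theorem w_of_eq_zero {s : ℝ} (h : ζ s = 0) : w n ζ s = u2' n s := by
  simp [w, h]

theorem hasDerivAt_rpow_u1' {s : ℝ} (hs : s ≠ 0) :
    HasDerivAt (fun x : ℝ => x ^ ((2 - (n : ℝ)) / 2)) (u1' n s) s := by
  convert Real.hasDerivAt_rpow_const (p := (2 - (n : ℝ)) / 2) (Or.inl hs) using 1
  rw [u1']
  ring_nf

theorem continuousOn_w (hζ : Continuous ζ) : ContinuousOn (w n ζ) (Ioi 0) := by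
  have hpow : ∀ e : ℝ, ContinuousOn (fun s : ℝ => s ^ e) (Ioi 0) := fun e s hs =>
    (Real.continuousAt_rpow_const s e (Or.inl (ne_of_gt hs))).continuousWithinAt
  unfold w u1' u2'
  exact (hζ.continuousOn.mul (continuousOn_const.mul (hpow _))).add
    ((continuousOn_const.sub hζ.continuousOn).mul (continuousOn_const.mul (hpow _)))

theorem integrableOn_u2'_Ioi (hn : 2 < n) {a : ℝ} (ha : 0 < a) : IntegrableOn (u2' n) (Ioi a) := by
  have : (2 : ℝ) < n := by exact_mod_cast hn
  exact (integrableOn_Ioi_rpow_of_lt (by linarith) ha).const_mul _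

theorem integrableOn_w_Ioi (hn : 2 < n) (hζ : Continuous ζ) {b : ℝ}
    (hζzero : ∀ s, b ≤ s → ζ s = 0) {a : ℝ} (ha : 0 < a) : IntegrableOn (w n ζ) (Ioi a) := by
  rw [← Ioc_union_Ioi_eq_Ioi (le_max_left a b)]
  refine IntegrableOn.union ?_ ?_
  · refine ((continuousOn_w hζ).mono fun s hs => ?_).integrableOn_Icc.mono_set Ioc_subset_Icc_self
    exact ha.trans_le hs.1
  · refine (integrableOn_u2'_Ioi hn (ha.trans_le (le_max_left a b))).congr_fun
      (fun s hs => (w_of_eq_zero (hζzero s ?_)).symm) measurableSet_Ioi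
    exact (le_max_right a b).trans (le_of_lt hs)

theorem setIntegral_Ioc_w_of_eq_one {r₀ : ℝ} (hζone : ∀ s, s ≤ r₀ → ζ s = 1) {r : ℝ}
    (hr : 0 < r) (hrr₀ : r ≤ r₀) :
    ∫ s in Ioc r r₀, w n ζ s = r₀ ^ ((2 - (n : ℝ)) / 2) - r ^ ((2 - (n : ℝ)) / 2) := by
  rw [setIntegral_congr_fun measurableSet_Ioc fun s hs => w_of_eq_one (hζone s hs.2),
    ← intervalIntegral.integral_of_le hrr₀]
  have hpos : ∀ s ∈ uIcc r r₀, 0 < s := fun s hs => hr.trans_le (uIcc_of_le hrr₀ ▸ hs).1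
  refine intervalIntegral.integral_eq_sub_of_hasDerivAt
    (fun s hs => hasDerivAt_rpow_u1' (hpos s hs).ne') (ContinuousOn.intervalIntegrable ?_)
  exact fun s hs => (continuousAt_const.mul
    (Real.continuousAt_rpow_const _ _ (Or.inl (hpos s hs).ne'))).continuousWithinAt

theorem uA_eq_sub_setIntegral_Ioi (hn : 2 < n) (hζ : Continuous ζ) {r₀ b : ℝ}
    (hζone : ∀ s, s ≤ r₀ → ζ s = 1) (hζzero : ∀ s, b ≤ s → ζ s = 0) (α : ℝ) {r : ℝ}
    (hr : 0 < r) (hrr₀ : r ≤ r₀) :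
    uA n ζ r₀ α r = α + r ^ ((2 - (n : ℝ)) / 2) - ∫ s in Ioi r₀, w n ζ s := by
  have hint := integrableOn_w_Ioi hn hζ hζzero hr
  rw [uA, ← Ioc_union_Ioi_eq_Ioi hrr₀,
    setIntegral_union (Ioc_disjoint_Ioi le_rfl) measurableSet_Ioi
      (hint.mono_set Ioc_subset_Ioi_self) (hint.mono_set (Ioi_subset_Ioi hrr₀)),
    setIntegral_Ioc_w_of_eq_one hζone hr hrr₀]
  ring

theorem mul_u1'_eq_neg_rpow (hn : n ≠ 2) {r : ℝ} (hr : 0 < r) :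
    2 / ((n : ℝ) - 2) * r * u1' n r = -r ^ ((2 - (n : ℝ)) / 2) := by
  have hn' : (n : ℝ) - 2 ≠ 0 := sub_ne_zero.2 (by exact_mod_cast hn)
  have hpow : r * r ^ (-(n : ℝ) / 2) = r ^ ((2 - (n : ℝ)) / 2) := by
    rw [show (2 - (n : ℝ)) / 2 = 1 + -(n : ℝ) / 2 by ring, Real.rpow_add hr, Real.rpow_one]
  rw [u1', ← hpow]
  field_simp
  ring

end Trumpet

theorem stmt_15_general (n : ℕ) (hn : 3 ≤ n) (r₀ : ℝ)
    (ζ : ℝ → ℝ) (hζC : ContDiff ℝ 1 ζ) (hζ01 : ∀ r : ℝ, 0 ≤ ζ r ∧ ζ r ≤ 1)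
    (hζone : ∀ r : ℝ, r ≤ r₀ → ζ r = 1) (hζzero : ∀ r : ℝ, 2 * r₀ ≤ r → ζ r = 0)
    (α : ℝ) (r : ℝ) (hr0 : 0 < r) (hr : r < r₀) :
    uA n ζ r₀ α r + (2 / ((n : ℝ) - 2)) * r * w n ζ r > α := by
  have hr₀ : 0 < r₀ := hr0.trans hr
  rw [uA_eq_sub_setIntegral_Ioi hn hζC.continuous hζone hζzero α hr0 hr.le,
    w_of_eq_one (hζone r hr.le), mul_u1'_eq_neg_rpow (by omega) hr0]
  have htail : ∫ s in Ioi r₀, w n ζ s < 0 :=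
    setIntegral_neg_of_forall_neg measurableSet_Ioi (by simp)
      (integrableOn_w_Ioi hn hζC.continuous hζzero hr₀) fun s hs => w_neg hn hζ01 (hr₀.trans hs)
  linarith

theorem stmt_15 (n : ℕ) (hn : 3 ≤ n) (r₀ : ℝ) (hr₀ : 0 < r₀)
    (hr₀2 : 2 * r₀ < (2 : ℝ) ^ ((2 : ℝ) / ((n : ℝ) - 2)))
    (ζ : ℝ → ℝ) (hζC : ContDiff ℝ 1 ζ) (hζ01 : ∀ r : ℝ, 0 ≤ ζ r ∧ ζ r ≤ 1)
    (hζone : ∀ r : ℝ, r ≤ r₀ → ζ r = 1) (hζzero : ∀ r : ℝ, 2 * r₀ ≤ r → ζ r = 0)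
    (hζder : ∀ r : ℝ, deriv ζ r ≤ 0)
    (α : ℝ) (r : ℝ) (hr0 : 0 < r) (hr : r < r₀) :
    uA n ζ r₀ α r + (2 / ((n : ℝ) - 2)) * r * w n ζ r > α :=
  stmt_15_general n hn r₀ ζ hζC hζ01 hζone hζzero α r hr0 hr
end

section
/- With the trumpet setup below, if α > (2r₀)^(2−n) then for every r ≥ 2r₀ one has u_α(r) + (2/(n−2))·r·w(r) > 0. -/
open MeasureTheory

theorem stmt_17 (n : ℕ) (hn : 3 ≤ n) (r₀ : ℝ) (hr₀ : 0 < r₀)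
    (hr₀2 : 2 * r₀ < (2 : ℝ) ^ ((2 : ℝ) / ((n : ℝ) - 2)))
    (ζ : ℝ → ℝ) (hζC : ContDiff ℝ 1 ζ) (hζ01 : ∀ r : ℝ, 0 ≤ ζ r ∧ ζ r ≤ 1)
    (hζone : ∀ r : ℝ, r ≤ r₀ → ζ r = 1) (hζzero : ∀ r : ℝ, 2 * r₀ ≤ r → ζ r = 0)
    (hζder : ∀ r : ℝ, deriv ζ r ≤ 0)
    (α : ℝ) (hα : (2 * r₀) ^ (2 - (n : ℝ)) < α)
    (r : ℝ) (hr : 2 * r₀ ≤ r) :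
    uA n ζ r₀ α r + (2 / ((n : ℝ) - 2)) * r * w n ζ r > 0 := by
  have hn2 : (2 : ℝ) < (n : ℝ) := by exact_mod_cast lt_of_lt_of_le (by norm_num) hn
  have hrpos : 0 < r := lt_of_lt_of_le (by linarith) hr
  have hζr : ζ r = 0 := hζzero r hr
  have hwr : w n ζ r = (2 - (n : ℝ)) * r ^ (1 - (n : ℝ)) := by
    simp [w, u2', hζr]
  have hcong : ∀ s ∈ Set.Ioi r, w n ζ s = (2 - (n : ℝ)) * s ^ (1 - (n : ℝ)) := by
    intro s hs
    have : ζ s = 0 := hζzero s (le_of_lt (lt_of_le_of_lt hr hs))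
    simp [w, u2', this]
  have hIoi : ∫ s in Set.Ioi r, s ^ (1 - (n : ℝ)) = -r ^ (2 - (n : ℝ)) / (2 - (n : ℝ)) := by
    have := integral_Ioi_rpow_of_lt (a := 1 - (n : ℝ)) (by linarith) hrpos
    rw [this]; ring_nf
  have hint : ∫ s in Set.Ioi r, w n ζ s = -r ^ (2 - (n : ℝ)) := by
    rw [setIntegral_congr_fun measurableSet_Ioi hcong, MeasureTheory.integral_const_mul, hIoi]
    have h2 : (2:ℝ) - (n:ℝ) ≠ 0 := by linarith
    field_simp
  have hmono : r ^ (2 - (n : ℝ)) ≤ (2 * r₀) ^ (2 - (n : ℝ)) :=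
    Real.rpow_le_rpow_of_nonpos (by linarith) hr (by linarith)
  have hr0pow : 0 < r₀ ^ ((2 - (n : ℝ)) / 2) := Real.rpow_pos_of_pos hr₀ _
  rw [uA, hint, hwr]
  have hfact : (2 / ((n : ℝ) - 2)) * r * ((2 - (n : ℝ)) * r ^ (1 - (n : ℝ)))
      = -2 * (r * r ^ (1 - (n : ℝ))) := by
    have hne : (n:ℝ) - 2 ≠ 0 := by linarith
    field_simp
    ring
  have hrr : r * r ^ (1 - (n : ℝ)) = r ^ (2 - (n : ℝ)) := by
    rw [← Real.rpow_one_add' (le_of_lt hrpos) (by linarith)]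
    norm_num
    rw [show (1:ℝ)+(1-(n:ℝ)) = 2-(n:ℝ) by ring]
  rw [hfact, hrr]
  nlinarith
end
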